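/- arXiv:2002.00315 — 2 statements merged into one kernel-verified Lean document; each statement's English description precedes it below -/
import Mathlib

section
/- Fix integers K ≥ 2 and T ≥ 2K, a subset S ⊆ [K], a real η with 0 < η ≤ 1/(64K), and set c = 64K. Let Ω = {p ∈ Δ(K) : p_i ≥ 1/T for all i} and ψ(p) = (1/η)·Σ_{i∈S} ln(1/p_i) + (1/η)·Σ_{i∉S} p_i ln p_i + c·Σ_{i∉S} ln(1/p_i). Let p_1 ∈ Ω, and for each t = 1,…,T let ℓ̂_t ∈ ℝ^K satisfy 0 ≤ ℓ̂_{t,i} ≤ 1/p_{t,i} for i ∈ S and 0 ≤ ℓ̂_{t,i} ≤ 1/(1 − p_{t,i}) for i ∉ S, and let p_{t+1} be a minimizer over Ω of p ↦ ⟨p, ℓ̂_t⟩ + D_ψ(p, p_t). Then for every u ∈ Ω: Σ_{t=1}^T ⟨p_t − u, ℓ̂_t⟩ ≤ D_ψ(u, p_1) + 16η·Σ_{t=1}^T ⟨p_t, ℓ̂_t⟩. -/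
/-!
The regularizer is separable, so `D_ψ(q, x)` is a sum of one-dimensional Bregman divergences of
`-log` and of `t log t`, each bounded below by a quadratic in `qᵢ - xᵢ`. This gives the stability
bound `⟨x - q, ℓ⟩ - D_ψ(q, x) ≤ 4η ⟨x, ℓ⟩` for an OMD step `x ↦ q`: a coordinate whose weight drops
pays for its own gain by AM-GM, except possibly the one coordinate `k ∉ S` with `xₖ > 1/2`, whose
loss estimate is only bounded by `1 / (1 - xₖ)`. The mass `xₖ - qₖ` it gives away goes to
coordinates of weight at most `1 - xₖ`, and by Sedrakyan's inequality their divergences pay for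
that gain; this is where the log-barrier term `c ≥ 4` is needed.
First-order optimality of the update and the three-point identity turn stability into
`⟨x - u, ℓ⟩ ≤ D_ψ(u, x) - D_ψ(u, q) + 4η ⟨x, ℓ⟩`, which telescopes over the rounds.
-/

open Finset

/-- Bregman divergence `D_ψ(x,y) = ψ(x) − ψ(y) − ⟨∇ψ(y), x − y⟩`. -/
noncomputable def breg {K : ℕ} (ψ : (Fin K → ℝ) → ℝ) (x y : Fin K → ℝ) : ℝ :=
  ψ x - ψ y - fderiv ℝ ψ y (x - y)

open Real InformationTheory

lemma sq_div_two_le_klFun {r : ℝ} (h0 : 0 < r) (h1 : r ≤ 1) : (1 - r) ^ 2 / 2 ≤ klFun r := by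
  -- `t ≤ sinh t` at `t = -log r` reads `-log r ≤ (r⁻¹ - r) / 2`
  have hsinh : -log r ≤ sinh (-log r) := self_le_sinh_iff.2 (neg_nonneg.2 (log_nonpos h0.le h1))
  rw [sinh_eq, neg_neg, exp_neg, exp_log h0] at hsinh
  have : r * (r⁻¹ - r) = 1 - r ^ 2 := by field_simp
  rw [klFun_apply]
  nlinarith

lemma sq_div_le_klFun {r : ℝ} (h1 : 1 ≤ r) : (r - 1) ^ 2 / (2 * r) ≤ klFun r := by
  have h0 : 0 < r := by linarith
  set s := 1 - r⁻¹ with hs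
  have hs0 : 0 ≤ s := sub_nonneg.2 (inv_le_one_of_one_le₀ h1)
  have hs1 : |s| < 1 := by rw [abs_of_nonneg hs0]; simp [hs, h0]
  -- the first two terms of the series `log r = -log (1 - s) = ∑ sⁿ⁺¹ / (n + 1)`
  have hlog : s + s ^ 2 / 2 ≤ log r := by
    have := sum_le_hasSum (range 2) (fun n _ => by positivity)
      (hasSum_pow_div_log_of_abs_lt_one hs1)
    norm_num [hs, sum_range_succ, log_inv] at this
    exact this
  have e : r * (s + s ^ 2 / 2) = r - 1 + (r - 1) ^ 2 / (2 * r) := by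
    simp only [hs]; field_simp
  rw [klFun_apply]
  nlinarith [mul_le_mul_of_nonneg_left hlog h0.le]

noncomputable def logBarrierDiv (a b : ℝ) : ℝ := a / b * klFun (b / a)

noncomputable def entropyDiv (a b : ℝ) : ℝ := b * klFun (a / b)

section Divergences

variable {a b : ℝ}

lemma logBarrierDiv_eq (ha : 0 < a) (hb : 0 < b) :
    logBarrierDiv a b = log (1 / a) - log (1 / b) - -b⁻¹ * (a - b) := by
  rw [logBarrierDiv, klFun_apply, log_div hb.ne' ha.ne', one_div, one_div, log_inv, log_inv]
  field_simp
  ring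

lemma entropyDiv_eq (ha : 0 < a) (hb : 0 < b) :
    entropyDiv a b = a * log a - b * log b - (log b + 1) * (a - b) := by
  rw [entropyDiv, klFun_apply, log_div ha.ne' hb.ne']
  field_simp
  ring

lemma logBarrierDiv_nonneg (ha : 0 < a) (hb : 0 < b) : 0 ≤ logBarrierDiv a b :=
  mul_nonneg (by positivity) (klFun_nonneg (by positivity))

lemma entropyDiv_nonneg (ha : 0 < a) (hb : 0 < b) : 0 ≤ entropyDiv a b :=
  mul_nonneg hb.le (klFun_nonneg (by positivity))

lemma sq_div_le_logBarrierDiv_of_le (ha : 0 < a) (hab : a ≤ b) :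
    (b - a) ^ 2 / (2 * b ^ 2) ≤ logBarrierDiv a b := by
  have hb : 0 < b := ha.trans_le hab
  rw [logBarrierDiv]
  calc (b - a) ^ 2 / (2 * b ^ 2) = a / b * ((b / a - 1) ^ 2 / (2 * (b / a))) := by field_simp
    _ ≤ _ := by gcongr; exact sq_div_le_klFun ((one_le_div ha).2 hab)

lemma sq_div_le_logBarrierDiv_of_ge (hb : 0 < b) (hba : b ≤ a) :
    (a - b) ^ 2 / (2 * a * b) ≤ logBarrierDiv a b := by
  have ha : 0 < a := hb.trans_le hba
  rw [logBarrierDiv]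
  calc (a - b) ^ 2 / (2 * a * b) = a / b * ((1 - b / a) ^ 2 / 2) := by field_simp
    _ ≤ _ := by gcongr; exact sq_div_two_le_klFun (div_pos hb ha) ((div_le_one ha).2 hba)

lemma sq_div_le_entropyDiv_of_le (ha : 0 < a) (hab : a ≤ b) :
    (b - a) ^ 2 / (2 * b) ≤ entropyDiv a b := by
  have hb : 0 < b := ha.trans_le hab
  rw [entropyDiv]
  calc (b - a) ^ 2 / (2 * b) = b * ((1 - a / b) ^ 2 / 2) := by field_simp
    _ ≤ _ := by gcongr; exact sq_div_two_le_klFun (div_pos ha hb) ((div_le_one hb).2 hab)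

lemma sq_div_le_entropyDiv_of_ge (hb : 0 < b) (hba : b ≤ a) :
    (a - b) ^ 2 / (2 * a) ≤ entropyDiv a b := by
  have ha : 0 < a := hb.trans_le hba
  rw [entropyDiv]
  calc (a - b) ^ 2 / (2 * a) = b * ((a / b - 1) ^ 2 / (2 * (a / b))) := by field_simp
    _ ≤ _ := by gcongr; exact sq_div_le_klFun ((one_le_div hb).2 hba)

end Divergences

lemma mul_sub_sq_div_le (a b : ℝ) {s : ℝ} (hs : 0 < s) :
    a * b - a ^ 2 / (2 * s) ≤ s * b ^ 2 / 2 := by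
  have : a ^ 2 / (2 * s) - a * b + s * b ^ 2 / 2 = (a - s * b) ^ 2 / (2 * s) := by
    field_simp; ring
  have : 0 ≤ (a - s * b) ^ 2 / (2 * s) := by positivity
  linarith

noncomputable def hybridDiv {ι : Type*} [DecidableEq ι] (S : Finset ι) (η c : ℝ) (i : ι)
    (a b : ℝ) : ℝ :=
  if i ∈ S then 1 / η * logBarrierDiv a b else 1 / η * entropyDiv a b + c * logBarrierDiv a b

section HybridDiv

variable {ι : Type*} [DecidableEq ι] {S : Finset ι} {η c x q l : ℝ} {i : ι}

lemma hybridDiv_nonneg (hη : 0 < η) (hc : 0 ≤ c) (hq : 0 < q) (hx : 0 < x) :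
    0 ≤ hybridDiv S η c i q x := by
  have := logBarrierDiv_nonneg hq hx
  have := entropyDiv_nonneg hq hx
  unfold hybridDiv
  split_ifs <;> positivity

lemma sub_mul_le_hybridDiv_add_of_mem (hi : i ∈ S) (hη : 0 < η) (hq : 0 < q) (hqx : q ≤ x)
    (hl : 0 ≤ l) (hxl : x * l ≤ 1) :
    (x - q) * l ≤ hybridDiv S η c i q x + 4 * η * (x * l) := by
  have hx : 0 < x := hq.trans_le hqx
  have hD : (x - q) ^ 2 / (2 * (η * x ^ 2)) ≤ hybridDiv S η c i q x := by
    rw [hybridDiv, if_pos hi]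
    calc (x - q) ^ 2 / (2 * (η * x ^ 2)) = 1 / η * ((x - q) ^ 2 / (2 * x ^ 2)) := by field_simp
      _ ≤ _ := by gcongr; exact sq_div_le_logBarrierDiv_of_le hq hqx
  have hAMGM := mul_sub_sq_div_le (x - q) l (by positivity : 0 < η * x ^ 2)
  have hxl' : (x * l) ^ 2 ≤ x * l := by nlinarith [mul_nonneg hx.le hl]
  nlinarith [mul_le_mul_of_nonneg_left hxl' hη.le]

lemma sub_mul_le_hybridDiv_add_of_notMem (hi : i ∉ S) (hη : 0 < η) (hc : 0 ≤ c) (hq : 0 < q)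
    (hqx : q ≤ x) (hx2 : x ≤ 1 / 2) (hl : 0 ≤ l) (hxl : (1 - x) * l ≤ 1) :
    (x - q) * l ≤ hybridDiv S η c i q x + 4 * η * (x * l) := by
  have hx : 0 < x := hq.trans_le hqx
  have hD : (x - q) ^ 2 / (2 * (η * x)) ≤ hybridDiv S η c i q x := by
    rw [hybridDiv, if_neg hi]
    have := mul_nonneg hc (logBarrierDiv_nonneg hq hx)
    calc (x - q) ^ 2 / (2 * (η * x)) = 1 / η * ((x - q) ^ 2 / (2 * x)) := by field_simp
      _ ≤ 1 / η * entropyDiv q x := by gcongr; exact sq_div_le_entropyDiv_of_le hq hqx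
      _ ≤ _ := by linarith
  have hAMGM := mul_sub_sq_div_le (x - q) l (by positivity : 0 < η * x)
  have hl2 : l ≤ 2 := by nlinarith
  nlinarith [mul_nonneg (mul_nonneg hη.le hx.le) hl]

lemma mul_sq_div_le_hybridDiv (hη : 0 < η) (hη8 : 8 * η ≤ 1) (hc : 4 ≤ c) (hx : 0 < x)
    (hx1 : x ≤ 1) (hxq : x ≤ q) :
    (1 / (4 * η) + 2 / x) * ((q - x) ^ 2 / q) ≤ hybridDiv S η c i q x := by
  have hq : 0 < q := hx.trans_le hxq
  have hlb := sq_div_le_logBarrierDiv_of_ge hx hxq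
  unfold hybridDiv
  split_ifs
  · calc (1 / (4 * η) + 2 / x) * ((q - x) ^ 2 / q)
          ≤ 1 / (2 * η * x) * ((q - x) ^ 2 / q) := by
            gcongr
            rw [div_add_div _ _ (by positivity) hx.ne',
              div_le_div_iff₀ (by positivity) (by positivity)]
            nlinarith [mul_nonneg (mul_pos hη hx).le (by linarith : 0 ≤ 2 - x - 8 * η)]
        _ = 1 / η * ((q - x) ^ 2 / (2 * q * x)) := by field_simp
        _ ≤ _ := by gcongr
  · have hent : 1 / (4 * η) * ((q - x) ^ 2 / q) ≤ 1 / η * entropyDiv q x := by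
      calc 1 / (4 * η) * ((q - x) ^ 2 / q) = 1 / η * ((q - x) ^ 2 / (2 * q) / 2) := by
            field_simp; ring
        _ ≤ 1 / η * ((q - x) ^ 2 / (2 * q)) :=
            mul_le_mul_of_nonneg_left (half_le_self (by positivity)) (by positivity)
        _ ≤ _ := by gcongr; exact sq_div_le_entropyDiv_of_ge hx hxq
    have hbar : 2 / x * ((q - x) ^ 2 / q) ≤ c * logBarrierDiv q x := by
      calc 2 / x * ((q - x) ^ 2 / q) = 4 * ((q - x) ^ 2 / (2 * q * x)) := by field_simp; ring
        _ ≤ c * logBarrierDiv q x := by gcongr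
    linarith

end HybridDiv

lemma heavy_gain_le {η x l Δ E : ℝ} (hη : 0 < η) (hx2 : 1 / 2 < x) (hx1 : x < 1)
    (hl : 0 ≤ l) (hxl : (1 - x) * l ≤ 1) (hΔ : 0 ≤ Δ)
    (hE : (1 / (4 * η) + 2 / (1 - x)) * (Δ ^ 2 / (1 - x + Δ)) ≤ E) :
    Δ * l ≤ E + 4 * η * (x * l) := by
  set β := 1 - x
  have hβ0 : 0 < β := by linarith
  have hxl0 : 0 ≤ 4 * η * (x * l) := by have := mul_nonneg (by linarith : 0 ≤ x) hl; positivity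
  rcases le_or_gt β Δ with hβΔ | hΔβ
  · have h1 : Δ / 2 ≤ Δ ^ 2 / (β + Δ) := by rw [le_div_iff₀ (by positivity)]; nlinarith
    have h2 : Δ * l ≤ 2 / β * (Δ / 2) := by
      rw [show 2 / β * (Δ / 2) = Δ * (1 / β) by ring]
      gcongr
      rw [le_div_iff₀ hβ0]; linarith
    have h3 : 2 / β * (Δ ^ 2 / (β + Δ)) ≤ E := by
      refine le_trans ?_ hE
      gcongr
      exact le_add_of_nonneg_left (by positivity)
    nlinarith [mul_le_mul_of_nonneg_left h1 (by positivity : 0 ≤ 2 / β)]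
  · have h1 : Δ ^ 2 / (2 * (4 * η * β)) ≤ E := by
      refine le_trans ?_ hE
      calc Δ ^ 2 / (2 * (4 * η * β)) = 1 / (4 * η) * (Δ ^ 2 / (2 * β)) := by field_simp
        _ ≤ 1 / (4 * η) * (Δ ^ 2 / (β + Δ)) := by gcongr; linarith
        _ ≤ _ := by gcongr; exact le_add_of_nonneg_right (by positivity)
    have h2 := mul_sub_sq_div_le Δ l (by positivity : 0 < 4 * η * β)
    nlinarith [mul_nonneg hη.le hl]

section Stability

variable {ι : Type*} [Fintype ι] [DecidableEq ι]

lemma add_le_sum_of_notMem {f : ι → ℝ} (hf : ∀ i, 0 ≤ f i) {s : Finset ι} {k : ι}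
    (hk : k ∉ s) : ∑ i ∈ s, f i + f k ≤ ∑ i, f i := by
  rw [add_comm, ← sum_insert hk]
  exact sum_le_univ_sum_of_nonneg hf

variable {η : ℝ} {x q l d : ι → ℝ}

lemma le_one_sub_of_ne (hx : ∀ i, 0 ≤ x i) (hxs : ∑ i, x i = 1) {j k : ι}
    (hjk : j ≠ k) : x j ≤ 1 - x k := by
  have := add_le_sum_of_notMem hx (s := {j}) (by simpa using hjk.symm)
  rw [sum_singleton, hxs] at this
  linarith

lemma mul_sq_div_le_sum_filter_lt (hη : 0 < η) (hx : ∀ i, 0 < x i) (hxs : ∑ i, x i = 1)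
    (hq : ∀ i, 0 < q i) (hqs : ∑ i, q i = 1)
    (hinc : ∀ i, x i ≤ q i → (1 / (4 * η) + 2 / x i) * ((q i - x i) ^ 2 / q i) ≤ d i)
    {k : ι} (hxk1 : x k < 1) (hqk : q k < x k) :
    (1 / (4 * η) + 2 / (1 - x k)) * ((x k - q k) ^ 2 / (1 - x k + (x k - q k))) ≤
      ∑ j ∈ univ.filter fun j => x j < q j, d j := by
  set Inc := univ.filter fun j => x j < q j
  have hkInc : k ∉ Inc := by simp [Inc]; linarith
  have hgain : x k - q k ≤ ∑ j ∈ Inc, (q j - x j) := by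
    have hbal : ∑ j ∈ Inc, (q j - x j) = ∑ j ∈ Incᶜ, (x j - q j) := by
      have := sum_add_sum_compl Inc (fun j => q j - x j)
      simp only [sum_sub_distrib, hqs, hxs, sub_self] at this ⊢
      linarith
    rw [hbal]
    exact single_le_sum (f := fun j => x j - q j)
      (fun j hj => sub_nonneg.2 (by simpa [Inc] using hj)) (mem_compl.2 hkInc)
  have hqInc : ∑ j ∈ Inc, q j ≤ 1 - x k + (x k - q k) := by
    have := add_le_sum_of_notMem (fun i => (hq i).le) hkInc
    linarith
  have hpos : 0 < ∑ j ∈ Inc, q j := by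
    refine sum_pos (fun j _ => hq j) (nonempty_of_sum_ne_zero (f := fun j => q j - x j) ?_)
    linarith
  calc _ ≤ (1 / (4 * η) + 2 / (1 - x k)) * ((∑ j ∈ Inc, (q j - x j)) ^ 2 / ∑ j ∈ Inc, q j) := by
        gcongr ?_ * ?_
        exact div_le_div₀ (sq_nonneg _) (pow_le_pow_left₀ (by linarith) hgain 2) hpos hqInc
    _ ≤ (1 / (4 * η) + 2 / (1 - x k)) * ∑ j ∈ Inc, (q j - x j) ^ 2 / q j := by
        gcongr
        exact sq_sum_div_le_sum_sq_div _ _ fun j _ => hq j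
    _ ≤ ∑ j ∈ Inc, d j := by
        rw [mul_sum]
        refine sum_le_sum fun j hj => le_trans ?_ (hinc j ?_)
        · have hjk : j ≠ k := fun h => hkInc (h ▸ hj)
          gcongr
          exacts [div_nonneg (sq_nonneg _) (hq j).le, hx j,
            le_one_sub_of_ne (fun i => (hx i).le) hxs hjk]
        · exact (by simpa [Inc] using hj : x j < q j).le

lemma sum_sub_mul_le_of_heavy (hη : 0 < η) (hx : ∀ i, 0 < x i) (hxs : ∑ i, x i = 1)
    (hq : ∀ i, 0 < q i) (hqs : ∑ i, q i = 1) (hl : ∀ i, 0 ≤ l i) (hd : ∀ i, 0 ≤ d i)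
    (hdec : ∀ i, q i ≤ x i → x i ≤ 1 / 2 → (x i - q i) * l i ≤ d i + 4 * η * (x i * l i))
    (hinc : ∀ i, x i ≤ q i → (1 / (4 * η) + 2 / x i) * ((q i - x i) ^ 2 / q i) ≤ d i)
    {k : ι} (hk : 1 / 2 < x k) (hxk1 : x k < 1) (hqk : q k < x k)
    (hlk : (1 - x k) * l k ≤ 1) :
    ∑ i, (x i - q i) * l i ≤ ∑ i, d i + 4 * η * ∑ i, x i * l i := by
  set Inc := univ.filter fun j => x j < q j
  have hkInc : k ∉ Inc := by simp [Inc]; linarith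
  have hE := mul_sq_div_le_sum_filter_lt hη hx hxs hq hqs hinc hxk1 hqk
  -- the divergences of the coordinates in `Inc` are spent on the gain of `k` instead
  have hcoord : ∀ j, (x j - q j) * l j ≤ d j - (if j ∈ Inc then d j else 0) +
      (if j = k then ∑ j ∈ Inc, d j else 0) + 4 * η * (x j * l j) := by
    intro j
    by_cases hjk : j = k
    · subst hjk
      rw [if_neg hkInc, if_pos rfl]
      have := heavy_gain_le hη hk hxk1 (hl j) hlk (by linarith) hE
      linarith [hd j]
    rw [if_neg hjk, add_zero]
    by_cases hj : j ∈ Inc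
    · have hxq : x j < q j := by simpa [Inc] using hj
      rw [if_pos hj, sub_self, zero_add]
      have := mul_nonpos_of_nonpos_of_nonneg (sub_nonpos.2 hxq.le) (hl j)
      have := mul_nonneg (hx j).le (hl j)
      nlinarith
    · rw [if_neg hj, sub_zero]
      have := le_one_sub_of_ne (fun i => (hx i).le) hxs hjk
      exact hdec j (by simpa [Inc] using hj) (by linarith)
  calc ∑ i, (x i - q i) * l i ≤ _ := sum_le_sum fun j _ => hcoord j
    _ = _ := by
      simp only [sum_add_distrib, sum_sub_distrib, sum_ite_mem, univ_inter, sum_ite_eq',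
        mem_univ, if_true, mul_sum]
      ring

lemma sum_sub_mul_le_of_coord_bounds (S : Finset ι) (hη : 0 < η) (hx : ∀ i, 0 < x i)
    (hx1 : ∀ i, x i < 1) (hxs : ∑ i, x i = 1) (hq : ∀ i, 0 < q i) (hqs : ∑ i, q i = 1)
    (hl : ∀ i, 0 ≤ l i) (hd : ∀ i, 0 ≤ d i)
    (hdec : ∀ i, q i ≤ x i → i ∈ S ∨ x i ≤ 1 / 2 →
      (x i - q i) * l i ≤ d i + 4 * η * (x i * l i))
    (hinc : ∀ i, x i ≤ q i → (1 / (4 * η) + 2 / x i) * ((q i - x i) ^ 2 / q i) ≤ d i)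
    (hheavy : ∀ i ∉ S, (1 - x i) * l i ≤ 1) :
    ∑ i, (x i - q i) * l i ≤ ∑ i, d i + 4 * η * ∑ i, x i * l i := by
  by_cases h : ∃ k ∉ S, 1 / 2 < x k ∧ q k < x k
  · obtain ⟨k, hkS, hk, hqk⟩ := h
    exact sum_sub_mul_le_of_heavy hη hx hxs hq hqs hl hd (fun i h1 h2 => hdec i h1 (.inr h2))
      hinc hk (hx1 k) hqk (hheavy k hkS)
  push Not at h
  rw [mul_sum, ← sum_add_distrib]
  refine sum_le_sum fun i _ => ?_
  rcases le_or_gt (x i) (q i) with hxq | hqx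
  · have := mul_nonpos_of_nonpos_of_nonneg (sub_nonpos.2 hxq) (hl i)
    have := mul_nonneg (hx i).le (hl i)
    nlinarith [hd i]
  · refine hdec i hqx.le ?_
    by_contra! h'
    exact hqx.not_ge (h i h'.1 h'.2)

theorem sum_sub_mul_le_sum_hybridDiv_add (S : Finset ι) {c : ℝ} (hη : 0 < η) (hη8 : 8 * η ≤ 1)
    (hc : 4 ≤ c) (hx : ∀ i, 0 < x i) (hx1 : ∀ i, x i < 1) (hxs : ∑ i, x i = 1)
    (hq : ∀ i, 0 < q i) (hqs : ∑ i, q i = 1) (hl : ∀ i, 0 ≤ l i)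
    (hlS : ∀ i ∈ S, l i ≤ 1 / x i) (hlC : ∀ i ∉ S, l i ≤ 1 / (1 - x i)) :
    ∑ i, (x i - q i) * l i ≤ ∑ i, hybridDiv S η c i (q i) (x i) + 4 * η * ∑ i, x i * l i := by
  have hxlS : ∀ i ∈ S, x i * l i ≤ 1 := fun i hi => by
    rw [mul_comm, ← le_div_iff₀ (hx i)]; exact hlS i hi
  have hxlC : ∀ i ∉ S, (1 - x i) * l i ≤ 1 := fun i hi => by
    rw [mul_comm, ← le_div_iff₀ (sub_pos.2 (hx1 i))]; exact hlC i hi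
  refine sum_sub_mul_le_of_coord_bounds S hη hx hx1 hxs hq hqs hl
    (fun i => hybridDiv_nonneg hη (by linarith) (hq i) (hx i)) (fun i hqx hi => ?_)
    (fun i hxq => mul_sq_div_le_hybridDiv hη hη8 hc (hx i) (hx1 i).le hxq) hxlC
  by_cases hiS : i ∈ S
  · exact sub_mul_le_hybridDiv_add_of_mem hiS hη (hq i) hqx (hl i) (hxlS i hiS)
  · exact sub_mul_le_hybridDiv_add_of_notMem hiS hη (by linarith) (hq i) hqx
      (hi.resolve_left hiS) (hl i) (hxlC i hiS)

lemma lt_one_of_mem_stdSimplex [Nontrivial ι] {p : ι → ℝ} (hp : p ∈ stdSimplex ℝ ι)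
    (hpos : ∀ j, 0 < p j) (i : ι) : p i < 1 := by
  obtain ⟨j, hj⟩ := exists_ne i
  linarith [le_one_sub_of_ne (fun k => (hpos k).le) hp.2 hj.symm, hpos j]

end Stability

noncomputable def hybridReg {ι : Type*} [DecidableEq ι] (S : Finset ι) (η c : ℝ) (i : ι)
    (t : ℝ) : ℝ :=
  if i ∈ S then 1 / η * log (1 / t) else 1 / η * (t * log t) + c * log (1 / t)

section HybridReg

variable {ι : Type*} [DecidableEq ι] {S : Finset ι} {η c : ℝ}

lemma sum_hybridReg [Fintype ι] (S : Finset ι) (η c : ℝ) (p : ι → ℝ) :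
    ∑ i, hybridReg S η c i (p i) = 1 / η * ∑ i ∈ S, log (1 / p i)
      + 1 / η * ∑ i ∈ Sᶜ, p i * log (p i) + c * ∑ i ∈ Sᶜ, log (1 / p i) := by
  have hS : ∑ i ∈ S, hybridReg S η c i (p i) = 1 / η * ∑ i ∈ S, log (1 / p i) := by
    rw [mul_sum]
    exact sum_congr rfl fun i hi => if_pos hi
  have hSc : ∑ i ∈ Sᶜ, hybridReg S η c i (p i) =
      1 / η * ∑ i ∈ Sᶜ, p i * log (p i) + c * ∑ i ∈ Sᶜ, log (1 / p i) := by
    rw [mul_sum, mul_sum, ← sum_add_distrib]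
    exact sum_congr rfl fun i hi => if_neg (mem_compl.1 hi)
  rw [← sum_add_sum_compl S, hS, hSc, add_assoc]

lemma hasDerivAt_hybridReg (i : ι) {b : ℝ} (hb : 0 < b) :
    HasDerivAt (hybridReg S η c i)
      (if i ∈ S then 1 / η * -b⁻¹ else 1 / η * (log b + 1) + c * -b⁻¹) b := by
  have hlog : HasDerivAt (fun t => log (1 / t)) (-b⁻¹) b := by
    simpa only [one_div, log_inv] using (hasDerivAt_log hb.ne').fun_neg
  unfold hybridReg
  split_ifs
  · exact hlog.const_mul _
  · exact ((hasDerivAt_mul_log hb.ne').const_mul _).add (hlog.const_mul c)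

end HybridReg

section Bregman

variable {K : ℕ}

lemma breg_sub_breg_sub_breg (ψ : (Fin K → ℝ) → ℝ) (u x q : Fin K → ℝ) :
    breg ψ u x - breg ψ u q - breg ψ q x = fderiv ℝ ψ q (u - q) - fderiv ℝ ψ x (u - q) := by
  simp only [breg, map_sub]
  ring

lemma hasFDerivAt_sum_apply {φ : Fin K → ℝ → ℝ} {φ' b : Fin K → ℝ}
    (h : ∀ i, HasDerivAt (φ i) (φ' i) (b i)) :
    HasFDerivAt (fun p : Fin K → ℝ => ∑ i, φ i (p i))
      (∑ i, φ' i • (ContinuousLinearMap.proj i : (Fin K → ℝ) →L[ℝ] ℝ)) b :=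
  HasFDerivAt.fun_sum fun i _ => (h i).comp_hasFDerivAt b (hasFDerivAt_apply i b)

lemma breg_sum_apply {φ : Fin K → ℝ → ℝ} {φ' b : Fin K → ℝ}
    (h : ∀ i, HasDerivAt (φ i) (φ' i) (b i)) (a : Fin K → ℝ) :
    breg (fun p => ∑ i, φ i (p i)) a b = ∑ i, (φ i (a i) - φ i (b i) - φ' i * (a i - b i)) := by
  simp [breg, (hasFDerivAt_sum_apply h).fderiv, sum_sub_distrib]

lemma breg_sum_hybridReg (S : Finset (Fin K)) (η c : ℝ) {a b : Fin K → ℝ}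
    (ha : ∀ i, 0 < a i) (hb : ∀ i, 0 < b i) :
    breg (fun p => ∑ i, hybridReg S η c i (p i)) a b = ∑ i, hybridDiv S η c i (a i) (b i) := by
  rw [breg_sum_apply fun i => hasDerivAt_hybridReg i (hb i)]
  refine sum_congr rfl fun i _ => ?_
  rw [hybridDiv, hybridReg, hybridReg, logBarrierDiv_eq (ha i) (hb i),
    entropyDiv_eq (ha i) (hb i)]
  split_ifs <;> ring

lemma breg_hybridReg_nonneg (S : Finset (Fin K)) {η c : ℝ} (hη : 0 < η) (hc : 0 ≤ c)
    {a b : Fin K → ℝ} (ha : ∀ i, 0 < a i) (hb : ∀ i, 0 < b i) :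
    0 ≤ breg (fun p => ∑ i, hybridReg S η c i (p i)) a b := by
  rw [breg_sum_hybridReg S η c ha hb]
  exact sum_nonneg fun i _ => hybridDiv_nonneg hη hc (ha i) (hb i)

lemma sum_sub_mul_le_breg_sub_breg_add {ψ : (Fin K → ℝ) → ℝ} {Ω : Set (Fin K → ℝ)}
    (hΩ : Convex ℝ Ω) {x q u l : Fin K → ℝ} (hψ : DifferentiableAt ℝ ψ q) (hq : q ∈ Ω)
    (hu : u ∈ Ω) (hmin : ∀ v ∈ Ω, ∑ i, q i * l i + breg ψ q x ≤ ∑ i, v i * l i + breg ψ v x) :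
    ∑ i, (x i - u i) * l i ≤
      breg ψ u x - breg ψ u q + (∑ i, (x i - q i) * l i - breg ψ q x) := by
  have hlin : HasFDerivAt (fun v : Fin K → ℝ => ∑ i, v i * l i)
      (∑ i, l i • (ContinuousLinearMap.proj i : (Fin K → ℝ) →L[ℝ] ℝ)) q :=
    hasFDerivAt_sum_apply fun i => hasDerivAt_mul_const (l i)
  have hbreg : HasFDerivAt (fun v => breg ψ v x) (fderiv ℝ ψ q - fderiv ℝ ψ x) q :=
    (hψ.hasFDerivAt.sub_const (ψ x)).sub
      ((fderiv ℝ ψ x).hasFDerivAt.comp q ((hasFDerivAt_id q).sub_const x))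
  have hfo := (show IsMinOn (fun v => ∑ i, v i * l i + breg ψ v x) Ω q from hmin).localize
    |>.hasFDerivWithinAt_nonneg (hlin.add hbreg).hasFDerivWithinAt
      (sub_mem_posTangentConeAt_of_segment_subset (hΩ.segment_subset hq hu))
  simp only [add_apply, sub_apply, _root_.sum_apply, smul_apply, ContinuousLinearMap.proj_apply,
    Pi.sub_apply, smul_eq_mul] at hfo
  have h3 := breg_sub_breg_sub_breg ψ u x q
  have : ∑ i, (x i - u i) * l i = ∑ i, (x i - q i) * l i - ∑ i, l i * (u i - q i) := by
    rw [← sum_sub_distrib]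
    exact sum_congr rfl fun i _ => by ring
  linarith

theorem omd_step_hybridReg [Nontrivial (Fin K)] (S : Finset (Fin K)) {η c : ℝ} (hη : 0 < η)
    (hη8 : 8 * η ≤ 1) (hc : 4 ≤ c) {ψ : (Fin K → ℝ) → ℝ}
    (hψ : ψ = fun p => ∑ i, hybridReg S η c i (p i)) {Ω : Set (Fin K → ℝ)} (hΩ : Convex ℝ Ω)
    (hΩs : Ω ⊆ stdSimplex ℝ (Fin K)) (hΩpos : ∀ v ∈ Ω, ∀ i, 0 < v i) {x q u l : Fin K → ℝ}
    (hx : x ∈ Ω) (hq : q ∈ Ω) (hu : u ∈ Ω) (hl : ∀ i, 0 ≤ l i) (hlS : ∀ i ∈ S, l i ≤ 1 / x i)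
    (hlC : ∀ i ∉ S, l i ≤ 1 / (1 - x i))
    (hmin : ∀ v ∈ Ω, ∑ i, q i * l i + breg ψ q x ≤ ∑ i, v i * l i + breg ψ v x) :
    ∑ i, (x i - u i) * l i ≤ breg ψ u x - breg ψ u q + 4 * η * ∑ i, x i * l i := by
  subst hψ
  have hdiff := (hasFDerivAt_sum_apply fun i => hasDerivAt_hybridReg (S := S) (η := η) (c := c) i
    (hΩpos q hq i)).differentiableAt
  have hstab := sum_sub_mul_le_sum_hybridDiv_add S hη hη8 hc (hΩpos x hx)
    (lt_one_of_mem_stdSimplex (hΩs hx) (hΩpos x hx)) (hΩs hx).2 (hΩpos q hq) (hΩs hq).2 hl hlS hlC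
  rw [← breg_sum_hybridReg S η c (hΩpos q hq) (hΩpos x hx)] at hstab
  linarith [sum_sub_mul_le_breg_sub_breg_add hΩ hdiff hq hu hmin]

end Bregman

lemma sum_Icc_le_of_le_sub_add {a b D : ℕ → ℝ} {T : ℕ}
    (h : ∀ t ∈ Icc 1 T, a t ≤ D t - D (t + 1) + b t) (hD : 0 ≤ D (T + 1)) :
    ∑ t ∈ Icc 1 T, a t ≤ D 1 + ∑ t ∈ Icc 1 T, b t := by
  have htel : ∑ t ∈ Icc 1 T, (D t - D (t + 1)) = D 1 - D (T + 1) := by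
    rw [← neg_sub, ← Ico_add_one_right_eq_Icc, ← sum_Ico_sub (f := D) (by omega),
      ← sum_neg_distrib]
    simp only [neg_sub]
  calc ∑ t ∈ Icc 1 T, a t ≤ ∑ t ∈ Icc 1 T, (D t - D (t + 1) + b t) := sum_le_sum h
    _ ≤ D 1 + ∑ t ∈ Icc 1 T, b t := by rw [sum_add_distrib, htel]; linarith

lemma mem_of_forall_Icc_succ_mem {α : Type*} {s : Set α} {p : ℕ → α} {T : ℕ} (h1 : p 1 ∈ s)
    (h : ∀ t ∈ Icc 1 T, p (t + 1) ∈ s) : ∀ t ∈ Icc 1 (T + 1), p t ∈ s := by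
  rintro (_ | _ | t) ht
  · simp at ht
  · exact h1
  · exact h (t + 1) (mem_Icc.2 ⟨by omega, by simp at ht; omega⟩)

theorem sum_regret_le_omd_hybridReg {K : ℕ} [Nontrivial (Fin K)] (S : Finset (Fin K)) {η c : ℝ}
    (hη : 0 < η) (hη8 : 8 * η ≤ 1) (hc : 4 ≤ c) {ψ : (Fin K → ℝ) → ℝ}
    (hψ : ψ = fun p => ∑ i, hybridReg S η c i (p i)) {Ω : Set (Fin K → ℝ)} (hΩ : Convex ℝ Ω)
    (hΩs : Ω ⊆ stdSimplex ℝ (Fin K)) (hΩpos : ∀ v ∈ Ω, ∀ i, 0 < v i) {T : ℕ}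
    {p ℓ : ℕ → Fin K → ℝ} (hp1 : p 1 ∈ Ω) (hℓ0 : ∀ t ∈ Icc 1 T, ∀ i, 0 ≤ ℓ t i)
    (hℓS : ∀ t ∈ Icc 1 T, ∀ i ∈ S, ℓ t i ≤ 1 / p t i)
    (hℓC : ∀ t ∈ Icc 1 T, ∀ i ∉ S, ℓ t i ≤ 1 / (1 - p t i))
    (hupd : ∀ t ∈ Icc 1 T, p (t + 1) ∈ Ω ∧ ∀ q ∈ Ω,
      ∑ i, p (t + 1) i * ℓ t i + breg ψ (p (t + 1)) (p t) ≤ ∑ i, q i * ℓ t i + breg ψ q (p t))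
    {u : Fin K → ℝ} (hu : u ∈ Ω) :
    ∑ t ∈ Icc 1 T, ∑ i, (p t i - u i) * ℓ t i ≤
      breg ψ u (p 1) + 4 * η * ∑ t ∈ Icc 1 T, ∑ i, p t i * ℓ t i := by
  have hp := mem_of_forall_Icc_succ_mem hp1 fun t ht => (hupd t ht).1
  rw [mul_sum]
  refine sum_Icc_le_of_le_sub_add (D := fun t => breg ψ u (p t)) (fun t ht => ?_) ?_
  · exact omd_step_hybridReg S hη hη8 hc hψ hΩ hΩs hΩpos (hp t (Icc_subset_Icc_right (by omega) ht))
      (hupd t ht).1 hu (hℓ0 t ht) (hℓS t ht) (hℓC t ht) (hupd t ht).2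
  · rw [hψ]
    exact breg_hybridReg_nonneg S hη (by linarith) (hΩpos u hu) (hΩpos _ (hp (T + 1) (by simp)))

/-- Pathwise small-loss regret bound underlying Theorem 3 of the paper: OMD
with log-barrier on the self-looped arms `S` and entropy-plus-log-barrier on
the remaining arms. -/
theorem stmt6 (K T : ℕ) (hK : 2 ≤ K) (hT : 2 * K ≤ T)
    (S : Finset (Fin K)) (η : ℝ) (hη0 : 0 < η) (hη : η ≤ 1 / (64 * K))
    (Ω : Set (Fin K → ℝ))
    (hΩ : Ω = {p | p ∈ stdSimplex ℝ (Fin K) ∧ ∀ i, 1 / (T : ℝ) ≤ p i})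
    (ψ : (Fin K → ℝ) → ℝ)
    (hψ : ψ = fun p => (1 / η) * ∑ i ∈ S, Real.log (1 / p i)
      + (1 / η) * ∑ i ∈ Sᶜ, p i * Real.log (p i)
      + (64 * (K : ℝ)) * ∑ i ∈ Sᶜ, Real.log (1 / p i))
    (p ℓ : ℕ → Fin K → ℝ)
    (hp1 : p 1 ∈ Ω)
    (hℓ0 : ∀ t ∈ Finset.Icc 1 T, ∀ i, 0 ≤ ℓ t i)
    (hℓS : ∀ t ∈ Finset.Icc 1 T, ∀ i ∈ S, ℓ t i ≤ 1 / p t i)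
    (hℓSc : ∀ t ∈ Finset.Icc 1 T, ∀ i ∉ S, ℓ t i ≤ 1 / (1 - p t i))
    (hupd : ∀ t ∈ Finset.Icc 1 T, p (t + 1) ∈ Ω ∧ ∀ q ∈ Ω,
      (∑ i, p (t + 1) i * ℓ t i) + breg ψ (p (t + 1)) (p t)
        ≤ (∑ i, q i * ℓ t i) + breg ψ q (p t)) :
    ∀ u ∈ Ω,
      ∑ t ∈ Finset.Icc 1 T, ∑ i, (p t i - u i) * ℓ t i ≤
        breg ψ u (p 1) + 16 * η * ∑ t ∈ Finset.Icc 1 T, ∑ i, p t i * ℓ t i := by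
  intro u hu
  have : Nontrivial (Fin K) := Fin.nontrivial_iff_two_le.2 hK
  have hη8 : 8 * η ≤ 1 := by
    have : (128 : ℝ) ≤ 64 * K := by norm_cast; omega
    rw [le_div_iff₀ (by positivity)] at hη
    nlinarith
  have hΩc : Convex ℝ Ω := by
    rw [hΩ]; exact (convex_stdSimplex ℝ _).inter (convex_Ici fun _ => 1 / (T : ℝ))
  have hpos : ∀ v ∈ Ω, ∀ i, 0 < v i := fun v hv i => by
    have : 0 < T := by omega
    exact (by positivity : (0 : ℝ) < 1 / T).trans_le ((hΩ ▸ hv).2 i)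
  have hψsum : ψ = fun v => ∑ i, hybridReg S η (64 * K) i (v i) := by
    rw [hψ]; funext v; rw [sum_hybridReg]
  have hp := mem_of_forall_Icc_succ_mem hp1 fun t ht => (hupd t ht).1
  have hloss : 0 ≤ ∑ t ∈ Icc 1 T, ∑ i, p t i * ℓ t i := sum_nonneg fun t ht => sum_nonneg
    fun i _ => mul_nonneg (hpos _ (hp t (Icc_subset_Icc_right (by omega) ht)) i).le (hℓ0 t ht i)
  have := sum_regret_le_omd_hybridReg S hη0 hη8 (by norm_cast; omega) hψsum hΩc
    (fun v hv => (hΩ ▸ hv).1) hpos hp1 hℓ0 hℓS hℓSc hupd hu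
  nlinarith
end

section
/- Fix integers K ≥ 2 and T ≥ 1 and a nonempty subset C ⊆ [K]. Let Ω = {p ∈ Δ(K) : p_i ≥ 1/(|C|·T) for all i ∈ C, and p_i = 0 for all i ∉ C}. Let p̃_1 be the uniform distribution on C, let ℓ̃_1, …, ℓ̃_T ∈ ℝ^K be nonnegative vectors, define η_t = 1/√(1 + Σ_{τ=1}^t Σ_{i=1}^K p̃_{τ,i}·ℓ̃_{τ,i}²) and ψ_t(p) = (1/η_t)·Σ_{i∈C} p_i ln p_i, and for each t let p̃_{t+1} be a minimizer over Ω of p ↦ ⟨p, ℓ̃_t⟩ + D_{ψ_t}(p, p̃_t) (with the convention 0·ln 0 = 0, all iterates being supported on C). Then for every u ∈ Ω: Σ_{t=1}^T ⟨p̃_t − u, ℓ̃_t⟩ ≤ ln K + (ln(KT) + 2)·√(1 + Σ_{t=1}^T Σ_{i=1}^K p̃_{t,i}·ℓ̃_{t,i}²). -/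
/-!
Each round of mirror descent with the entropic regulariser scaled by `c = 1 / η_t` satisfies
`⟨p_t - u, ℓ_t⟩ ≤ ⟨p_t, ℓ_t²⟩ / c + c (KL(u‖p_t) - KL(u‖p_{t+1}))`. The divergence terms come
from the first-order optimality of `p_{t+1}` on the convex set `Ω` and the three-point identity
of the Bregman divergence; the stability term `⟨p_t - p_{t+1}, ℓ_t⟩` is controlled through
`exp (-a) ≤ 1 - a + a²`. Summing over `t`, the ratios `z_t / √(1 + z_1 + ⋯ + z_t)` with
`z_t = ⟨p_t, ℓ_t²⟩` telescope to at most `2 √(1 + z_1 + ⋯ + z_T)`, and Abel summation of the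
divergence terms against the nondecreasing `1 / η_t` costs at most `log (|C| T)` per unit
increase of `1 / η_t`, because every point of `Ω` has coordinates at least `1 / (|C| T)` on `C`.
Finally `KL(u‖p_1) ≤ log |C|`.
-/

open Finset

open Real Filter Topology

lemma Real.exp_neg_le_one_sub_add_sq {x : ℝ} (hx : 0 ≤ x) : exp (-x) ≤ 1 - x + x ^ 2 := by
  have h1x : 0 < 1 + x := by linarith
  calc exp (-x) = (exp x)⁻¹ := exp_neg x
    _ ≤ (1 + x)⁻¹ := inv_anti₀ h1x (by linarith [add_one_le_exp x])
    _ ≤ 1 - x + x ^ 2 := by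
      rw [inv_le_iff_one_le_mul₀ h1x]
      nlinarith [pow_nonneg hx 3]

lemma Real.sub_le_mul_log_div {x y : ℝ} (hx : 0 < x) (hy : 0 < y) : x - y ≤ x * log (x / y) := by
  have h := mul_le_mul_of_nonneg_left (one_sub_inv_le_log_of_pos (div_pos hx hy)) hx.le
  rwa [inv_div, mul_sub, mul_one, mul_div_cancel₀ _ hx.ne'] at h

lemma Real.mul_log_div_add_sub_le_sq_div {x y : ℝ} (hx : 0 < x) (hy : 0 < y) :
    x * log (x / y) + y - x ≤ (x - y) ^ 2 / y := by
  have h := mul_le_mul_of_nonneg_left (log_le_sub_one_of_pos (div_pos hx hy)) hx.le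
  have hsq : (x - y) ^ 2 / y = x * (x / y - 1) + y - x := by field_simp; ring
  linarith

/-- `log t ≤ t - 1` at `t = y * exp (-a) / x`. -/
lemma Real.sub_mul_le_mul_log_div_add {x y a : ℝ} (hx : 0 < x) (hy : 0 < y) (ha : 0 ≤ a) :
    (y - x) * a ≤ x * log (x / y) + y - x + y * a ^ 2 := by
  have h := mul_le_mul_of_nonneg_left
    (log_le_sub_one_of_pos (by positivity : 0 < y * exp (-a) / x)) hx.le
  rw [log_div (by positivity) hx.ne', log_mul hy.ne' (exp_ne_zero _), log_exp,
    mul_sub_one, mul_div_cancel₀ _ hx.ne'] at h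
  have hexp := mul_le_mul_of_nonneg_left (exp_neg_le_one_sub_add_sq ha) hy.le
  rw [log_div hx.ne' hy.ne']
  nlinarith

lemma nonneg_of_forall_mul_add_sq_mul_nonneg {D M : ℝ}
    (h : ∀ t ∈ Set.Ioc (0 : ℝ) 1, 0 ≤ t * D + t ^ 2 * M) : 0 ≤ D := by
  have hlim : Tendsto (fun t : ℝ => D + t * M) (𝓝[>] 0) (𝓝 D) := by
    have : Continuous fun t : ℝ => D + t * M := by fun_prop
    simpa using (this.tendsto 0).mono_left nhdsWithin_le_nhds
  refine ge_of_tendsto hlim ?_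
  filter_upwards [Ioc_mem_nhdsGT zero_lt_one] with t ht
  exact nonneg_of_mul_nonneg_right (by linarith [h t ht]) ht.1

lemma sub_div_sqrt_le_two_mul_sqrt_sub {a b : ℝ} (ha : 0 ≤ a) (hab : a ≤ b) (hb : 0 < b) :
    (b - a) / √b ≤ 2 * (√b - √a) := by
  rw [div_le_iff₀ (sqrt_pos.2 hb)]
  nlinarith [sq_sqrt ha, sq_sqrt hb.le, sqrt_le_sqrt hab, sqrt_nonneg a]

lemma sum_div_sqrt_add_sum_le {a : ℝ} (ha : 0 < a) {z : ℕ → ℝ} {n : ℕ}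
    (hz : ∀ t ∈ Icc 1 n, 0 ≤ z t) :
    ∑ t ∈ Icc 1 n, z t / √(a + ∑ τ ∈ Icc 1 t, z τ) ≤ 2 * (√(a + ∑ t ∈ Icc 1 n, z t) - √a) := by
  induction n with
  | zero => simp
  | succ n ih =>
    have hz' : ∀ t ∈ Icc 1 n, 0 ≤ z t := fun t ht =>
      hz t (Icc_subset_Icc_right n.le_succ ht)
    have hzn := hz (n + 1) (right_mem_Icc.2 n.succ_pos)
    have hsum := sum_nonneg hz'
    have hstep := sub_div_sqrt_le_two_mul_sqrt_sub (a := a + ∑ t ∈ Icc 1 n, z t)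
      (b := a + ∑ t ∈ Icc 1 n, z t + z (n + 1)) (by positivity) (by linarith) (by positivity)
    rw [add_sub_cancel_left] at hstep
    rw [sum_Icc_succ_top (by omega), sum_Icc_succ_top (by omega), ← add_assoc]
    linarith [ih hz']

lemma sum_mul_sub_le {r κ : ℕ → ℝ} {B : ℝ} {n : ℕ} (hr : ∀ t < n, r t ≤ r (t + 1))
    (hκ : ∀ t ∈ Icc 1 n, κ t ≤ B) :
    ∑ t ∈ Icc 1 n, r t * (κ t - κ (t + 1)) ≤ r 0 * κ 1 + B * (r n - r 0) - r n * κ (n + 1) := by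
  induction n with
  | zero => simp
  | succ n ih =>
    rw [sum_Icc_succ_top (by omega : 1 ≤ n + 1)]
    have := ih (fun t ht => hr t (by omega)) fun t ht => hκ t (Icc_subset_Icc_right n.le_succ ht)
    nlinarith [mul_le_mul_of_nonneg_left (hκ (n + 1) (right_mem_Icc.2 n.succ_pos))
      (sub_nonneg.2 (hr n n.lt_succ_self))]

theorem sum_div_sqrt_add_sqrt_mul_sub_le {z κ : ℕ → ℝ} {B : ℝ} {n : ℕ}
    (hz : ∀ t ∈ Icc 1 n, 0 ≤ z t) (hκ : ∀ t ∈ Icc 1 (n + 1), 0 ≤ κ t ∧ κ t ≤ B) :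
    ∑ t ∈ Icc 1 n, (z t / √(1 + ∑ τ ∈ Icc 1 t, z τ)
        + √(1 + ∑ τ ∈ Icc 1 t, z τ) * (κ t - κ (t + 1)))
      ≤ κ 1 + (B + 2) * √(1 + ∑ t ∈ Icc 1 n, z t) := by
  have hmono : ∀ t < n, √(1 + ∑ τ ∈ Icc 1 t, z τ) ≤ √(1 + ∑ τ ∈ Icc 1 (t + 1), z τ) :=
    fun t ht => sqrt_le_sqrt <| by
      rw [sum_Icc_succ_top (by omega)]
      linarith [hz (t + 1) (mem_Icc.2 ⟨by omega, ht⟩)]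
  have hdiv := sum_div_sqrt_add_sum_le one_pos hz
  have habel := sum_mul_sub_le hmono fun t ht => (hκ t (Icc_subset_Icc_right n.le_succ ht)).2
  have hκ1 := hκ 1 (left_mem_Icc.2 (by omega))
  have hlast := mul_nonneg (sqrt_nonneg (1 + ∑ t ∈ Icc 1 n, z t))
    (hκ (n + 1) (right_mem_Icc.2 (by omega))).1
  simp only [Icc_eq_empty_of_lt zero_lt_one, sum_empty, add_zero, sqrt_one,
    one_mul] at hdiv habel
  rw [sum_add_distrib]
  nlinarith

section KullbackLeibler

variable {ι : Type*}

/-- The `+ y i - x i` terms make this the Bregman divergence of `∑ i ∈ s, x i * log (x i)`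
for vectors that need not be normalised. -/
noncomputable def klDivOn (s : Finset ι) (x y : ι → ℝ) : ℝ :=
  ∑ i ∈ s, (x i * log (x i / y i) + y i - x i)

variable {s : Finset ι} {u v w : ι → ℝ}

lemma klDivOn_nonneg (hu : ∀ i ∈ s, 0 < u i) (hw : ∀ i ∈ s, 0 < w i) : 0 ≤ klDivOn s u w :=
  sum_nonneg fun i hi => by linarith [sub_le_mul_log_div (hu i hi) (hw i hi)]

lemma klDivOn_le_sum_sq_div (hu : ∀ i ∈ s, 0 < u i) (hw : ∀ i ∈ s, 0 < w i) :
    klDivOn s u w ≤ ∑ i ∈ s, (u i - w i) ^ 2 / w i :=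
  sum_le_sum fun i hi => mul_log_div_add_sub_le_sq_div (hu i hi) (hw i hi)

lemma klDivOn_sub_klDivOn_sub_klDivOn (hu : ∀ i ∈ s, 0 < u i) (hv : ∀ i ∈ s, 0 < v i)
    (hw : ∀ i ∈ s, 0 < w i) :
    klDivOn s u w - klDivOn s u v - klDivOn s v w = ∑ i ∈ s, (u i - v i) * log (v i / w i) := by
  simp only [klDivOn, ← sum_sub_distrib]
  refine sum_congr rfl fun i hi => ?_
  rw [log_div (hu i hi).ne' (hw i hi).ne', log_div (hu i hi).ne' (hv i hi).ne',
    log_div (hv i hi).ne' (hw i hi).ne']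
  ring

/-- Comparing `p` with `p + t • (u - p)` and letting `t → 0` gives the first-order optimality
condition, which the three-point identity turns into a difference of divergences. -/
theorem sum_sub_mul_le_of_isMinOn [Fintype ι] {Ω : Set (ι → ℝ)} (hΩ : Convex ℝ Ω)
    (hpos : ∀ q ∈ Ω, ∀ i ∈ s, 0 < q i) {c : ℝ} (hc : 0 ≤ c) {ℓ p : ι → ℝ} (hp : p ∈ Ω)
    (hu : u ∈ Ω) (hw : ∀ i ∈ s, 0 < w i)
    (hmin : IsMinOn (fun q => ∑ i, q i * ℓ i + c * klDivOn s q w) Ω p) :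
    ∑ i, (p i - u i) * ℓ i ≤ c * (klDivOn s u w - klDivOn s u p - klDivOn s p w) := by
  set L := ∑ i, (u i - p i) * ℓ i
  set G := ∑ i ∈ s, (u i - p i) * log (p i / w i)
  suffices 0 ≤ L + c * G by
    have hL : ∑ i, (p i - u i) * ℓ i = -L := by
      rw [← sum_neg_distrib]; exact sum_congr rfl fun i _ => by ring
    rw [klDivOn_sub_klDivOn_sub_klDivOn (hpos u hu) (hpos p hp) hw, hL]
    linarith
  refine nonneg_of_forall_mul_add_sq_mul_nonneg
    (M := c * ∑ i ∈ s, (u i - p i) ^ 2 / p i) fun t ht => ?_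
  have hq : p + t • (u - p) ∈ Ω := hΩ.add_smul_sub_mem hp hu (Set.Ioc_subset_Icc_self ht)
  have hle := isMinOn_iff.1 hmin _ hq
  have hthree := klDivOn_sub_klDivOn_sub_klDivOn (hpos _ hq) (hpos p hp) hw
  have hchi := mul_le_mul_of_nonneg_left (klDivOn_le_sum_sq_div (hpos _ hq) (hpos p hp)) hc
  simp only [Pi.add_apply, Pi.smul_apply, Pi.sub_apply, smul_eq_mul, add_sub_cancel_left,
    mul_pow, mul_assoc, mul_div_assoc, ← mul_sum, add_mul, sum_add_distrib] at hle hthree hchi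
  linear_combination hle + hchi + c * hthree

lemma sum_sub_mul_le_mul_klDivOn_add {c : ℝ} (hc : 0 < c) {ℓ p : ι → ℝ}
    (hp : ∀ i ∈ s, 0 < p i) (hw : ∀ i ∈ s, 0 < w i) (hℓ : ∀ i ∈ s, 0 ≤ ℓ i) :
    ∑ i ∈ s, (w i - p i) * ℓ i ≤ c * klDivOn s p w + (∑ i ∈ s, w i * ℓ i ^ 2) / c := by
  rw [klDivOn, mul_sum, sum_div, ← sum_add_distrib]
  refine sum_le_sum fun i hi => ?_
  have h := mul_le_mul_of_nonneg_left
    (sub_mul_le_mul_log_div_add (hp i hi) (hw i hi) (div_nonneg (hℓ i hi) hc.le)) hc.le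
  calc (w i - p i) * ℓ i = c * ((w i - p i) * (ℓ i / c)) := by field_simp
    _ ≤ _ := h
    _ = _ := by field_simp

end KullbackLeibler

lemma hasFDerivAt_mul_sum_mul_log {ι : Type*} [Fintype ι] (C : Finset ι) (c : ℝ) {y : ι → ℝ}
    (hy : ∀ i ∈ C, y i ≠ 0) :
    HasFDerivAt (fun q : ι → ℝ => c * ∑ i ∈ C, q i * log (q i))
      (c • ∑ i ∈ C, (log (y i) + 1) • ContinuousLinearMap.proj (R := ℝ) (φ := fun _ => ℝ) i) y :=
  (HasFDerivAt.fun_sum fun i hi => by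
    exact (hasDerivAt_mul_log (hy i hi)).comp_hasFDerivAt y
      (hasFDerivAt_apply (𝕜 := ℝ) i y)).const_mul c

lemma breg_mul_sum_mul_log {K : ℕ} (C : Finset (Fin K)) (c : ℝ) {x y : Fin K → ℝ}
    (hx : ∀ i ∈ C, 0 < x i) (hy : ∀ i ∈ C, 0 < y i) :
    breg (fun q => c * ∑ i ∈ C, q i * log (q i)) x y = c * klDivOn C x y := by
  rw [breg, (hasFDerivAt_mul_sum_mul_log C c fun i hi => (hy i hi).ne').fderiv]
  simp only [smul_apply, _root_.sum_apply, ContinuousLinearMap.proj_apply, Pi.sub_apply,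
    smul_eq_mul, klDivOn, ← mul_sub, ← sum_sub_distrib]
  congr 1
  refine sum_congr rfl fun i hi => ?_
  rw [log_div (hx i hi).ne' (hy i hi).ne']
  ring

section ClippedSimplex

variable {ι : Type*} [Fintype ι] {C : Finset ι} {δ : ℝ} {x u w : ι → ℝ}

def clippedSimplex (C : Finset ι) (δ : ℝ) : Set (ι → ℝ) :=
  {p | p ∈ stdSimplex ℝ ι ∧ (∀ i ∈ C, δ ≤ p i) ∧ ∀ i ∉ C, p i = 0}

lemma convex_clippedSimplex : Convex ℝ (clippedSimplex C δ) := by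
  intro x hx y hy a b ha hb hab
  refine ⟨convex_stdSimplex ℝ ι hx.1 hy.1 ha hb hab, fun i hi => ?_, fun i hi => ?_⟩
  · simp only [Pi.add_apply, Pi.smul_apply, smul_eq_mul]
    calc δ = a * δ + b * δ := by rw [← add_mul, hab, one_mul]
      _ ≤ a * x i + b * y i := by gcongr <;> [exact hx.2.1 i hi; exact hy.2.1 i hi]
  · simp [hx.2.2 i hi, hy.2.2 i hi]

lemma pos_of_mem_clippedSimplex (hδ : 0 < δ) (hx : x ∈ clippedSimplex C δ) (i : ι)
    (hi : i ∈ C) : 0 < x i :=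
  hδ.trans_le (hx.2.1 i hi)

lemma sum_eq_one_of_mem_clippedSimplex (hx : x ∈ clippedSimplex C δ) : ∑ i ∈ C, x i = 1 := by
  rw [sum_subset (subset_univ C) fun i _ hi => hx.2.2 i hi]
  exact hx.1.2

lemma nonempty_of_mem_clippedSimplex (hx : x ∈ clippedSimplex C δ) : C.Nonempty :=
  nonempty_of_sum_ne_zero (f := x) (by rw [sum_eq_one_of_mem_clippedSimplex hx]; exact one_ne_zero)

lemma le_one_of_mem_clippedSimplex (hx : x ∈ clippedSimplex C δ) (i : ι) : x i ≤ 1 :=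
  hx.1.2 ▸ single_le_sum (fun j _ => hx.1.1 j) (mem_univ i)

lemma sum_mul_eq_of_mem_clippedSimplex (hx : x ∈ clippedSimplex C δ) (f : ι → ℝ) :
    ∑ i, x i * f i = ∑ i ∈ C, x i * f i :=
  (sum_subset (subset_univ C) fun i _ hi => by rw [hx.2.2 i hi, zero_mul]).symm

lemma uniform_mem_clippedSimplex [DecidableEq ι] (hC : C.Nonempty) (hδ : δ ≤ (C.card : ℝ)⁻¹) :
    (fun i => if i ∈ C then (C.card : ℝ)⁻¹ else 0) ∈ clippedSimplex C δ := by
  refine ⟨⟨fun i => ?_, ?_⟩, fun i hi => by simpa [hi], fun i hi => by simp [hi]⟩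
  · dsimp only
    split_ifs <;> positivity
  · rw [sum_ite_mem, univ_inter, sum_const, nsmul_eq_mul, mul_inv_cancel₀]
    exact_mod_cast hC.card_pos.ne'

lemma klDivOn_le_log_inv (hδ : 0 < δ) (hu : u ∈ clippedSimplex C δ) {ε : ℝ} (hε : 0 < ε)
    (hw : ∀ i ∈ C, ε ≤ w i) (hw1 : ∑ i ∈ C, w i = 1) : klDivOn C u w ≤ log ε⁻¹ := by
  have hu1 := sum_eq_one_of_mem_clippedSimplex hu
  rw [klDivOn, sum_sub_distrib, sum_add_distrib, hu1, hw1, add_sub_cancel_right,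
    ← one_mul (log ε⁻¹), ← hu1, sum_mul]
  refine sum_le_sum fun i hi => mul_le_mul_of_nonneg_left ?_ (hu.1.1 i)
  have hui := pos_of_mem_clippedSimplex hδ hu i hi
  have hwi := hε.trans_le (hw i hi)
  refine log_le_log (div_pos hui hwi) ?_
  rw [div_le_iff₀ hwi]
  calc u i ≤ 1 := le_one_of_mem_clippedSimplex hu i
    _ ≤ ε⁻¹ * w i := by rw [inv_mul_eq_div, one_le_div hε]; exact hw i hi

theorem sum_sub_mul_le_of_isMinOn_clippedSimplex (hδ : 0 < δ) {c : ℝ} (hc : 0 < c)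
    {p ℓ : ι → ℝ} (hℓ : ∀ i, 0 ≤ ℓ i) (hw : w ∈ clippedSimplex C δ)
    (hp : p ∈ clippedSimplex C δ) (hu : u ∈ clippedSimplex C δ)
    (hmin : IsMinOn (fun q => ∑ i, q i * ℓ i + c * klDivOn C q w) (clippedSimplex C δ) p) :
    ∑ i, (w i - u i) * ℓ i ≤ (∑ i, w i * ℓ i ^ 2) / c + c * (klDivOn C u w - klDivOn C u p) := by
  have hpos : ∀ q ∈ clippedSimplex C δ, ∀ i ∈ C, 0 < q i :=
    fun q hq => pos_of_mem_clippedSimplex hδ hq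
  have hopt := sum_sub_mul_le_of_isMinOn convex_clippedSimplex hpos hc.le hp hu (hpos w hw) hmin
  have hstab := sum_sub_mul_le_mul_klDivOn_add hc (hpos p hp) (hpos w hw) fun i _ => hℓ i
  have hsq : ∑ i ∈ C, w i * ℓ i ^ 2 = ∑ i, w i * ℓ i ^ 2 :=
    (sum_mul_eq_of_mem_clippedSimplex hw _).symm
  have hsplit : ∑ i, (w i - u i) * ℓ i = ∑ i ∈ C, (w i - p i) * ℓ i + ∑ i, (p i - u i) * ℓ i := by
    rw [sum_subset (subset_univ C) fun i _ hi => by rw [hw.2.2 i hi, hp.2.2 i hi, sub_zero,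
      zero_mul], ← sum_add_distrib]
    exact sum_congr rfl fun i _ => by ring
  rw [hsplit, ← hsq]
  linarith

theorem sum_sub_mul_le_klDivOn_add_of_isMinOn (hδ : 0 < δ) {T : ℕ} {p ℓ : ℕ → ι → ℝ}
    (hp : ∀ t ∈ Icc 1 (T + 1), p t ∈ clippedSimplex C δ) (hℓ : ∀ t ∈ Icc 1 T, ∀ i, 0 ≤ ℓ t i)
    (hmin : ∀ t ∈ Icc 1 T, IsMinOn (fun q => ∑ i, q i * ℓ t i
        + √(1 + ∑ τ ∈ Icc 1 t, ∑ i, p τ i * ℓ τ i ^ 2) * klDivOn C q (p t))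
      (clippedSimplex C δ) (p (t + 1)))
    (hu : u ∈ clippedSimplex C δ) :
    ∑ t ∈ Icc 1 T, ∑ i, (p t i - u i) * ℓ t i
      ≤ klDivOn C u (p 1) + (log δ⁻¹ + 2) * √(1 + ∑ t ∈ Icc 1 T, ∑ i, p t i * ℓ t i ^ 2) := by
  have hz : ∀ t ∈ Icc 1 T, 0 ≤ ∑ i, p t i * ℓ t i ^ 2 := fun t ht => sum_nonneg fun i _ =>
    mul_nonneg ((hp t (Icc_subset_Icc_right T.le_succ ht)).1.1 i) (sq_nonneg _)
  refine (sum_le_sum fun t ht => sum_sub_mul_le_of_isMinOn_clippedSimplex hδ ?_ (hℓ t ht)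
    (hp t (Icc_subset_Icc_right T.le_succ ht)) (hp (t + 1) ?_) hu (hmin t ht)).trans
    (sum_div_sqrt_add_sqrt_mul_sub_le hz fun t ht => ⟨?_, ?_⟩)
  · exact sqrt_pos.2 (add_pos_of_pos_of_nonneg one_pos
      (sum_nonneg fun τ hτ => hz τ (Icc_subset_Icc_right (mem_Icc.1 ht).2 hτ)))
  · simp only [mem_Icc] at ht ⊢
    omega
  · exact klDivOn_nonneg (pos_of_mem_clippedSimplex hδ hu) (pos_of_mem_clippedSimplex hδ (hp t ht))
  · exact klDivOn_le_log_inv hδ hu hδ (hp t ht).2.1 (sum_eq_one_of_mem_clippedSimplex (hp t ht))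

end ClippedSimplex

theorem stmt7_general (K T : ℕ) (hT : 1 ≤ T)
    (C : Finset (Fin K))
    (Ω : Set (Fin K → ℝ))
    (hΩ : Ω = {p | p ∈ stdSimplex ℝ (Fin K) ∧
      (∀ i ∈ C, 1 / ((C.card : ℝ) * T) ≤ p i) ∧ ∀ i ∉ C, p i = 0})
    (p ℓ : ℕ → Fin K → ℝ) (η : ℕ → ℝ) (ψ : ℕ → (Fin K → ℝ) → ℝ)
    (hp1 : ∀ i, p 1 i = if i ∈ C then ((C.card : ℝ))⁻¹ else 0)
    (hℓ0 : ∀ t ∈ Finset.Icc 1 T, ∀ i, 0 ≤ ℓ t i)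
    (hη : ∀ t, η t = 1 / Real.sqrt (1 + ∑ τ ∈ Finset.Icc 1 t, ∑ i, p τ i * ℓ τ i ^ 2))
    (hψ : ∀ t, ψ t = fun q => (1 / η t) * ∑ i ∈ C, q i * Real.log (q i))
    (hupd : ∀ t ∈ Finset.Icc 1 T, p (t + 1) ∈ Ω ∧ ∀ q ∈ Ω,
      (∑ i, p (t + 1) i * ℓ t i) + breg (ψ t) (p (t + 1)) (p t)
        ≤ (∑ i, q i * ℓ t i) + breg (ψ t) q (p t)) :
    ∀ u ∈ Ω,
      ∑ t ∈ Finset.Icc 1 T, ∑ i, (p t i - u i) * ℓ t i ≤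
        Real.log K + (Real.log ((K : ℝ) * T) + 2) *
          Real.sqrt (1 + ∑ t ∈ Finset.Icc 1 T, ∑ i, p t i * ℓ t i ^ 2) := by
  intro u hu
  subst hΩ
  set δ : ℝ := 1 / ((C.card : ℝ) * T)
  change u ∈ clippedSimplex C δ at hu
  have hC := nonempty_of_mem_clippedSimplex hu
  have hCpos : (0 : ℝ) < C.card := by exact_mod_cast hC.card_pos
  have hCK : (C.card : ℝ) ≤ K := by exact_mod_cast (card_le_univ C).trans_eq (Fintype.card_fin K)
  have hδ : 0 < δ := by positivity
  have hδinv : δ⁻¹ = C.card * T := by simp only [δ, one_div, inv_inv]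
  have hmem : ∀ t ∈ Icc 1 (T + 1), p t ∈ clippedSimplex C δ := by
    rintro (_ | _ | t) ht
    · simp at ht
    · rw [show p 1 = _ from funext hp1]
      refine uniform_mem_clippedSimplex hC ((le_inv_comm₀ hCpos hδ).1 ?_)
      exact hδinv ▸ le_mul_of_one_le_right hCpos.le (by exact_mod_cast hT)
    · exact (hupd (t + 1) (by simp only [mem_Icc] at ht ⊢; omega)).1
  have hbreg : ∀ t ∈ Icc 1 T, ∀ q ∈ clippedSimplex C δ, breg (ψ t) q (p t)
      = √(1 + ∑ τ ∈ Icc 1 t, ∑ i, p τ i * ℓ τ i ^ 2) * klDivOn C q (p t) := fun t ht q hq => by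
    rw [hψ t, hη t, one_div_one_div]
    exact breg_mul_sum_mul_log C _ (pos_of_mem_clippedSimplex hδ hq)
      (pos_of_mem_clippedSimplex hδ (hmem t (Icc_subset_Icc_right T.le_succ ht)))
  have hκ1 : klDivOn C u (p 1) ≤ log C.card := by
    simpa using klDivOn_le_log_inv hδ hu (inv_pos.2 hCpos) (fun i hi => by rw [hp1, if_pos hi])
      (sum_eq_one_of_mem_clippedSimplex (hmem 1 (left_mem_Icc.2 (by omega))))
  refine (sum_sub_mul_le_klDivOn_add_of_isMinOn hδ hmem hℓ0
    (fun t ht => isMinOn_iff.2 fun q hq => ?_) hu).trans ?_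
  · simpa only [hbreg t ht q hq, hbreg t ht _ (hupd t ht).1] using (hupd t ht).2 q hq
  rw [hδinv]
  gcongr ?_ + (?_ + 2) * _
  · exact hκ1.trans (log_le_log hCpos hCK)
  · exact log_le_log (by positivity) (by gcongr)

/-- Intermediate guarantee, uniform over comparators, for Hedge with adaptive
learning rates (Algorithm 3 of the paper) restricted to an active set `C`. -/
theorem stmt7 (K T : ℕ) (hK : 2 ≤ K) (hT : 1 ≤ T)
    (C : Finset (Fin K)) (hC : C.Nonempty)
    (Ω : Set (Fin K → ℝ))
    (hΩ : Ω = {p | p ∈ stdSimplex ℝ (Fin K) ∧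
      (∀ i ∈ C, 1 / ((C.card : ℝ) * T) ≤ p i) ∧ ∀ i ∉ C, p i = 0})
    (p ℓ : ℕ → Fin K → ℝ) (η : ℕ → ℝ) (ψ : ℕ → (Fin K → ℝ) → ℝ)
    (hp1 : ∀ i, p 1 i = if i ∈ C then ((C.card : ℝ))⁻¹ else 0)
    (hℓ0 : ∀ t ∈ Finset.Icc 1 T, ∀ i, 0 ≤ ℓ t i)
    (hη : ∀ t, η t = 1 / Real.sqrt (1 + ∑ τ ∈ Finset.Icc 1 t, ∑ i, p τ i * ℓ τ i ^ 2))
    (hψ : ∀ t, ψ t = fun q => (1 / η t) * ∑ i ∈ C, q i * Real.log (q i))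
    (hupd : ∀ t ∈ Finset.Icc 1 T, p (t + 1) ∈ Ω ∧ ∀ q ∈ Ω,
      (∑ i, p (t + 1) i * ℓ t i) + breg (ψ t) (p (t + 1)) (p t)
        ≤ (∑ i, q i * ℓ t i) + breg (ψ t) q (p t)) :
    ∀ u ∈ Ω,
      ∑ t ∈ Finset.Icc 1 T, ∑ i, (p t i - u i) * ℓ t i ≤
        Real.log K + (Real.log ((K : ℝ) * T) + 2) *
          Real.sqrt (1 + ∑ t ∈ Finset.Icc 1 T, ∑ i, p t i * ℓ t i ^ 2) :=
  stmt7_general K T hT C Ω hΩ p ℓ η ψ hp1 hℓ0 hη hψ hupd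
end
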